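/- arXiv:1612.05670 — 2 statements merged into one kernel-verified Lean document; each statement's English description precedes it below -/
import Mathlib

section
/- Let F be a field, let R = F[t_1,…,t_n], and for k = 0,1,…,n let P_k denote the ideal of R generated by {t_1,…,t_k} (with P_0 = {0}). For every k ∈ {1,…,n}, if P' is a prime ideal of R with P_{k-1} ⊊ P' ⊆ P_k, then P' = P_k. Consequently, the chain P_0 ⊂ P_1 ⊂ ⋯ ⊂ P_n is a maximal chain of prime ideals in R: no prime ideal can be strictly inserted between consecutive terms. -/
open MvPolynomial

/-- In a domain with well-founded divisibility, a nonzero prime ideal contained in the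
ideal generated by a prime element `x` must contain `x`. -/
lemma aux_prime_mem {A : Type*} [CommRing A] [IsDomain A] [WfDvdMonoid A]
    {x : A} (hx : Prime x) {Q : Ideal A} (hQ : Q.IsPrime)
    (hle : Q ≤ Ideal.span {x}) {a : A} (ha : a ∈ Q) (ha0 : a ≠ 0) : x ∈ Q := by
  revert ha ha0
  refine WellFounded.induction (wellFounded_dvdNotUnit (α := A))
    (C := fun a => a ∈ Q → a ≠ 0 → x ∈ Q) a ?_
  intro a ih ha ha0
  obtain ⟨b, rfl⟩ := Ideal.mem_span_singleton'.mp (hle ha)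
  rcases hQ.mem_or_mem ha with hb | hxQ
  · have hb0 : b ≠ 0 := by rintro rfl; simp at ha0
    exact ih b ⟨hb0, x, hx.not_unit, rfl⟩ hb hb0
  · exact hxQ

lemma aux_span_isPrime {F : Type*} [Field F] {n : ℕ} (s : Set (Fin n)) :
    (Ideal.span (MvPolynomial.X '' s : Set (MvPolynomial (Fin n) F))).IsPrime := by
  classical
  set φ : MvPolynomial (Fin n) F →ₐ[F] MvPolynomial (Fin n) F :=
    aeval (fun i : Fin n => if i ∈ s then 0 else X i) with hφ
  have key : ∀ f : MvPolynomial (Fin n) F,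
      f - φ f ∈ Ideal.span (MvPolynomial.X '' s : Set (MvPolynomial (Fin n) F)) := by
    intro f
    induction f using MvPolynomial.induction_on with
    | C a => simp [hφ]
    | add f g hf hg =>
      have : f + g - φ (f + g) = (f - φ f) + (g - φ g) := by rw [map_add]; ring
      rw [this]; exact Ideal.add_mem _ hf hg
    | mul_X f i hf =>
      have : f * X i - φ (f * X i) = (f - φ f) * X i + φ f * (X i - φ (X i)) := by
        rw [map_mul]; ring
      rw [this]
      refine Ideal.add_mem _ (Ideal.mul_mem_right _ _ hf) (Ideal.mul_mem_left _ _ ?_)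
      by_cases hi : i ∈ s
      · simpa [hφ, hi] using Ideal.subset_span (Set.mem_image_of_mem X hi)
      · simp [hφ, hi]
  have hker : Ideal.span (MvPolynomial.X '' s : Set (MvPolynomial (Fin n) F)) =
      RingHom.ker φ.toRingHom := by
    apply le_antisymm
    · rw [Ideal.span_le]
      rintro _ ⟨i, hi, rfl⟩
      simp [RingHom.mem_ker, hφ, hi]
    · intro f hf
      rw [RingHom.mem_ker] at hf
      simp only [AlgHom.toRingHom_eq_coe, RingHom.coe_coe] at hf
      simpa [hf] using key f
  rw [hker]
  exact RingHom.ker_isPrime _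

set_option maxHeartbeats 1000000 in
set_option synthInstance.maxHeartbeats 200000 in
/-- Let `F` be a field, `R = F[t_1,…,t_n]`, and for `k = 0,…,n` let `P k` be the ideal
generated by the first `k` variables (so `P 0 = {0}`).  For every `k ∈ {1,…,n}`, if `P'`
is a prime ideal of `R` with `P (k-1) ⊊ P' ⊆ P k`, then `P' = P k`; that is, no prime
ideal can be strictly inserted between consecutive terms of the chain
`P 0 ⊂ P 1 ⊂ ⋯ ⊂ P n`. -/
theorem stmt_3 (F : Type*) [Field F] (n : ℕ)
    (P : ℕ → Ideal (MvPolynomial (Fin n) F))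
    (hP : ∀ k, P k = Ideal.span (MvPolynomial.X '' {i : Fin n | (i : ℕ) < k})) :
    ∀ k, 1 ≤ k → k ≤ n → ∀ P' : Ideal (MvPolynomial (Fin n) F),
      P'.IsPrime → P (k - 1) < P' → P' ≤ P k → P' = P k := by
  intro k hk1 hkn P' hP' hlt hle
  classical
  set R := MvPolynomial (Fin n) F
  set I : Ideal R := P (k - 1) with hI
  -- the distinguished variable
  set j : Fin n := ⟨k - 1, by omega⟩ with hj
  -- the set of indices splits
  have hset : {i : Fin n | (i : ℕ) < k} = {i : Fin n | (i : ℕ) < k - 1} ∪ {j} := by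
    ext i
    simp only [Set.mem_setOf_eq, Set.mem_union, Set.mem_singleton_iff]
    constructor
    · intro h
      by_cases h' : (i : ℕ) < k - 1
      · exact Or.inl h'
      · exact Or.inr (by apply Fin.ext; simp [hj]; omega)
    · rintro (h | rfl)
      · omega
      · simp [hj]; omega
  have hPk : P k = I ⊔ Ideal.span {(X j : R)} := by
    rw [hP k, hI, hP (k - 1), hset, Set.image_union, Ideal.span_union, Set.image_singleton]
  -- I is prime, X j ∉ I
  have hIprime : I.IsPrime := by rw [hI, hP]; exact aux_span_isPrime _
  have hXjI : (X j : R) ∉ I := by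
    rw [hI, hP, mem_ideal_span_X_image]
    push_neg
    refine ⟨Finsupp.single j 1, ?_, ?_⟩
    · simp [MvPolynomial.support_X]
    · intro i hi
      refine Finsupp.single_eq_of_ne ?_
      rintro rfl
      simp only [Set.mem_setOf_eq, hj] at hi
      omega
  have hIP' : I ≤ P' := le_of_lt hlt
  -- pass to the quotient
  let A := R ⧸ I
  haveI : I.IsPrime := hIprime
  haveI hdom : IsDomain A := Ideal.Quotient.isDomain I
  haveI hnoeth : IsNoetherianRing A := inferInstance
  haveI hwf : WfDvdMonoid A := inferInstance
  let q : R →+* A := Ideal.Quotient.mk I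
  have hqsurj : Function.Surjective q := Ideal.Quotient.mk_surjective
  have hker : RingHom.ker q = I := Ideal.mk_ker
  set x : A := q (X j) with hx
  have hx0 : x ≠ 0 := by
    rw [hx, Ne, Ideal.Quotient.eq_zero_iff_mem]
    exact hXjI
  -- span {x} = image of P k, and it is prime
  have hmapPk : Ideal.map q (P k) = Ideal.span {x} := by
    apply le_antisymm
    · rw [Ideal.map_le_iff_le_comap, hPk, sup_le_iff]
      constructor
      · intro a haI
        simp only [Ideal.mem_comap]
        have : q a = 0 := Ideal.Quotient.eq_zero_iff_mem.mpr haI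
        rw [this]; exact Ideal.zero_mem _
      · rw [Ideal.span_le]
        rintro _ rfl
        exact Ideal.mem_comap.mpr (Ideal.subset_span rfl)
    · rw [Ideal.span_le, Set.singleton_subset_iff]
      exact Ideal.mem_map_of_mem q (by rw [hPk]; exact Ideal.mem_sup_right (Ideal.subset_span rfl))
  have hPkprime : (P k).IsPrime := by rw [hP]; exact aux_span_isPrime _
  have hspanx_prime : (Ideal.span {x}).IsPrime := by
    rw [← hmapPk]
    exact Ideal.map_isPrime_of_surjective hqsurj (by rw [hker]; rw [hPk]; exact le_sup_left)
  have hxprime : Prime x := (Ideal.span_singleton_prime hx0).mp hspanx_prime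
  -- image of P'
  set Q : Ideal A := Ideal.map q P' with hQ
  have hQprime : Q.IsPrime :=
    Ideal.map_isPrime_of_surjective hqsurj (by rw [hker]; exact hIP')
  have hQle : Q ≤ Ideal.span {x} := by
    rw [hQ, ← hmapPk]
    exact Ideal.map_mono hle
  -- Q is nonzero
  obtain ⟨f, hfP', hfI⟩ := Set.exists_of_ssubset hlt
  have hqf : q f ∈ Q := Ideal.mem_map_of_mem q hfP'
  have hqf0 : q f ≠ 0 := by
    rw [Ne, Ideal.Quotient.eq_zero_iff_mem]
    exact hfI
  -- conclude x ∈ Q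
  have hxQ : x ∈ Q := aux_prime_mem hxprime hQprime hQle hqf hqf0
  -- pull back: X j ∈ P'
  have hXjP' : (X j : R) ∈ P' := by
    have hcomap : Ideal.comap q Q = P' := by
      rw [hQ, Ideal.comap_map_of_surjective q hqsurj, ← RingHom.ker_eq_comap_bot, hker,
        sup_eq_left.mpr hIP']
    rw [← hcomap]
    exact Ideal.mem_comap.mpr hxQ
  refine le_antisymm hle ?_
  rw [hPk, sup_le_iff]
  exact ⟨hIP', by rw [Ideal.span_le, Set.singleton_subset_iff]; exact hXjP'⟩
end

section
/- Let F be an infinite field, let n ≥ 1, and let f be a nonzero polynomial in F[t_1,…,t_n]. Then there exist elements a_1,…,a_{n-1} ∈ F, a nonzero element λ ∈ F, and a polynomial g ∈ F[t_1,…,t_n] such that g, regarded as a polynomial in the variable t_n with coefficients in F[t_1,…,t_{n-1}], is monic, and g(t_1,…,t_{n-1},t_n) = λ^{-1} · f(t_1 + a_1 t_n, t_2 + a_2 t_n, …, t_{n-1} + a_{n-1} t_n, t_n). -/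
open MvPolynomial

section Aux
variable {F : Type*} [Field F]

private lemma aux_eval_smul {σ : Type*} {φ : MvPolynomial σ F} {d : ℕ}
    (hφ : φ.IsHomogeneous d) (c : F) (x : σ → F) :
    eval (c • x) φ = c ^ d * eval x φ := by
  rw [eval_eq, eval_eq, Finset.mul_sum]
  refine Finset.sum_congr rfl fun m hm => ?_
  have hdm : ∑ i ∈ m.support, m i = d := by
    have := hφ (mem_support_iff.mp hm)
    simpa [Finsupp.weight_apply, Finsupp.sum] using this
  have : ∏ i ∈ m.support, (c • x) i ^ m i
      = c ^ d * ∏ i ∈ m.support, x i ^ m i := by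
    simp only [Pi.smul_apply, smul_eq_mul, mul_pow]
    rw [Finset.prod_mul_distrib, Finset.prod_pow_eq_pow_sum, hdm]
  rw [this]; ring

private lemma aux_eq_C_of_isHomogeneous_zero {σ : Type*} {p : MvPolynomial σ F}
    (hp : p.IsHomogeneous 0) : p = C (constantCoeff p) := by
  classical
  ext m
  obtain rfl | hm := eq_or_ne m 0
  · simp [constantCoeff_eq]
  · rw [hp.coeff_eq_zero (by simpa [Finsupp.degree_eq_zero_iff] using hm), coeff_C,
      if_neg (by simpa using (Ne.symm hm))]

private lemma aux_coeff_finSuccEquiv {n d : ℕ} {H : MvPolynomial (Fin (n + 1)) F}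
    (hH : H.IsHomogeneous d) :
    (finSuccEquiv F n H).coeff d = C (eval (Fin.cons 1 0) H) := by
  have hdeg : (finSuccEquiv F n H).natDegree < d + 1 := by
    have h1 := natDegree_finSuccEquiv H
    have h2 := degreeOf_le_totalDegree H 0
    have h3 := hH.totalDegree_le
    omega
  have aux : ∀ i ∈ Finset.range d, constantCoeff ((finSuccEquiv F n H).coeff i) = 0 := by
    intro i hi
    rw [Finset.mem_range] at hi
    apply (hH.finSuccEquiv_coeff_isHomogeneous i (d - i) (by omega)).coeff_eq_zero
    simp only [map_zero]
    omega
  have heval : eval (Fin.cons (1 : F) (0 : Fin n → F)) H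
      = constantCoeff ((finSuccEquiv F n H).coeff d) := by
    simp_rw [eval_eq_eval_mv_eval', Polynomial.eval_one_map,
      Polynomial.eval_eq_sum_range' hdeg, eval_zero, one_pow, mul_one, map_sum,
      Finset.sum_range_succ, Finset.sum_eq_zero aux, zero_add]
  rw [heval]
  exact aux_eq_C_of_isHomogeneous_zero
    (hH.finSuccEquiv_coeff_isHomogeneous d 0 (add_zero d))

private lemma aux_eval_aeval {σ : Type*} (x : σ → F) (g : σ → MvPolynomial σ F)
    (p : MvPolynomial σ F) :
    eval x (aeval g p) = eval (fun j => eval x (g j)) p := by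
  rw [aeval_def, eval₂_comp_left (eval x)]
  congr 1
  ext r
  simp [algebraMap_eq]

end Aux

set_option maxHeartbeats 1000000 in
/-- Let `F` be an infinite field and `f` a nonzero polynomial in `n + 1 ≥ 1` variables
over `F`.  (Here the distinguished variable "t_n" of the paper is the variable `X 0`,
and the remaining variables `t_1,…,t_{n-1}` are `X i.succ` for `i : Fin n`.)
Then there are elements `a_1,…,a_{n-1} ∈ F` and a nonzero `λ ∈ F` and a polynomial `g`
which, regarded as a polynomial in the distinguished variable with coefficients in the
polynomial ring in the other variables, is monic, and
`g = λ⁻¹ · f(t_1 + a_1 t_n, …, t_{n-1} + a_{n-1} t_n, t_n)`. -/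
theorem stmt_6 (F : Type*) [Field F] [Infinite F] (n : ℕ)
    (f : MvPolynomial (Fin (n + 1)) F) (hf : f ≠ 0) :
    ∃ (a : Fin n → F) (lam : F), lam ≠ 0 ∧
      ∃ g : MvPolynomial (Fin (n + 1)) F,
        (MvPolynomial.finSuccEquiv F n g).Monic ∧
        g = lam⁻¹ • MvPolynomial.aeval
            (fun j : Fin (n + 1) =>
              Fin.cases (MvPolynomial.X 0)
                (fun i : Fin n =>
                  MvPolynomial.X i.succ + MvPolynomial.C (a i) * MvPolynomial.X 0) j) f := by
  classical
  set d := f.totalDegree with hd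
  set fd := MvPolynomial.homogeneousComponent d f with hfdef
  have hhom : fd.IsHomogeneous d := homogeneousComponent_isHomogeneous d f
  have hfd : fd ≠ 0 := by
    obtain ⟨m, hm, hmd⟩ := Finset.exists_mem_eq_sup f.support (support_nonempty.mpr hf)
      (fun m : Fin (n + 1) →₀ ℕ => m.sum fun _ e => e)
    have hmdeg : m.degree = d := by
      rw [hd, totalDegree, hmd]; rfl
    intro h
    apply mem_support_iff.mp hm
    have hc := coeff_homogeneousComponent d f m
    rw [if_pos hmdeg, ← hfdef, h] at hc
    simpa using hc.symm
  -- find a point with nonzero first coordinate where fd does not vanish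
  obtain ⟨r, hr⟩ : ∃ r, eval r ((X 0 : MvPolynomial (Fin (n + 1)) F) * fd) ≠ 0 := by
    by_contra h
    push_neg at h
    exact mul_ne_zero (X_ne_zero 0) hfd (MvPolynomial.funext fun x => by simpa using h x)
  rw [map_mul, eval_X] at hr
  have hr0 : r 0 ≠ 0 := fun h => hr (by rw [h, zero_mul])
  have hrfd : eval r fd ≠ 0 := fun h => hr (by rw [h, mul_zero])
  set c := r 0 with hc
  set a : Fin n → F := fun i => r i.succ * c⁻¹ with ha
  have hra : r = c • (Fin.cons 1 a : Fin (n + 1) → F) := by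
    funext j
    refine Fin.cases ?_ (fun i => ?_) j
    · simp [hc]
    · show r i.succ = c * (r i.succ * c⁻¹)
      rw [mul_comm (r i.succ) c⁻¹, mul_inv_cancel_left₀ hr0]
  set lam := eval (Fin.cons 1 a : Fin (n + 1) → F) fd with hlamdef
  have hlam : lam ≠ 0 := by
    intro h
    apply hrfd
    rw [hra, aux_eval_smul hhom, ← hlamdef, h, mul_zero]
  set σf : Fin (n + 1) → MvPolynomial (Fin (n + 1)) F := fun j =>
    Fin.cases (MvPolynomial.X 0)
      (fun i : Fin n =>
        MvPolynomial.X i.succ + MvPolynomial.C (a i) * MvPolynomial.X 0) j with hσ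
  have hσhom : ∀ j, (σf j).IsHomogeneous 1 := by
    intro j
    refine Fin.cases ?_ (fun i => ?_) j
    · exact isHomogeneous_X _ _
    · exact (isHomogeneous_X _ _).add (isHomogeneous_C_mul_X _ _)
  have hahom : ∀ i, (aeval σf (MvPolynomial.homogeneousComponent i f)).IsHomogeneous i := by
    intro i
    simpa using (homogeneousComponent_isHomogeneous i f).aeval σf hσhom
  set P := finSuccEquiv F n (aeval σf f) with hP
  have hPdeg : P.natDegree ≤ d := by
    rw [hP, natDegree_finSuccEquiv]
    refine le_trans (degreeOf_le_totalDegree _ _) ?_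
    conv_lhs => rw [← sum_homogeneousComponent f, map_sum]
    refine (totalDegree_finset_sum _ _).trans (Finset.sup_le fun i hi => ?_)
    rw [Finset.mem_range] at hi
    exact (hahom i).totalDegree_le.trans (by omega)
  have hPd : P.coeff d = C lam := by
    conv_lhs => rw [hP]
    conv_lhs => rw [← sum_homogeneousComponent f, map_sum, map_sum,
      Polynomial.finset_sum_coeff]
    rw [Finset.sum_eq_single d]
    · have hpt : (fun j => eval (Fin.cons (1 : F) (0 : Fin n → F)) (σf j))
          = (Fin.cons 1 a : Fin (n + 1) → F) := by
        funext j
        refine Fin.cases ?_ (fun i => ?_) j <;> simp [hσ]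
      rw [aux_coeff_finSuccEquiv (hahom d), aux_eval_aeval, hpt, hlamdef]
    · intro i hi hne
      rw [Finset.mem_range] at hi
      apply Polynomial.coeff_eq_zero_of_natDegree_lt
      rw [natDegree_finSuccEquiv]
      have h2 := degreeOf_le_totalDegree (aeval σf (MvPolynomial.homogeneousComponent i f)) 0
      have h3 := (hahom i).totalDegree_le
      omega
    · intro h
      exact absurd (Finset.self_mem_range_succ d) h
  have hCeq : finSuccEquiv F n (lam⁻¹ • aeval σf f)
      = Polynomial.C (C lam⁻¹) * P := by
    rw [smul_eq_C_mul, map_mul, hP]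
    congr 1
    exact MvPolynomial.finSuccEquiv_apply F n (C lam⁻¹) ▸ by simp
  have hMon : (finSuccEquiv F n (lam⁻¹ • aeval σf f)).Monic := by
    rw [hCeq]
    apply Polynomial.monic_of_natDegree_le_of_coeff_eq_one d
    · exact (Polynomial.natDegree_mul_le).trans
        (by simpa [Polynomial.natDegree_C] using hPdeg)
    · rw [Polynomial.coeff_C_mul, hPd, ← map_mul, inv_mul_cancel₀ hlam, map_one]
  exact ⟨a, lam, hlam, lam⁻¹ • aeval σf f, hMon, rfl⟩
end
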